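/- Fix α ∈ ℤ^n and m ∈ ℕ with m - ||α||₁ = 2r ≥ 0 even. The complex vector space of harmonic polynomials on ℝ^{2n} of the form Q(|z₁|²,...,|z_n|²) ∏_j z_{σ(j)}^{|α_j|} (with Q homogeneous of degree r, and σ(j) choosing z_j or z̄_j according to the sign of α_j) has dimension binomial(r+n-2, n-2). -/

import Mathlib

open MvPolynomial

/-- The Laplacian `∑_j ∂_{z_j} ∂_{z̄_j}` in complex coordinates on `ℝ^{2n} ≅ ℂⁿ`
(variables `inl j ↦ z_j`, `inr j ↦ z̄_j`). -/
noncomputable def cxLaplacian (n : ℕ) :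
    MvPolynomial (Fin n ⊕ Fin n) ℂ →ₗ[ℂ] MvPolynomial (Fin n ⊕ Fin n) ℂ :=
  ∑ j : Fin n, (pderiv (Sum.inl j)).toLinearMap ∘ₗ (pderiv (Sum.inr j)).toLinearMap

/-- The monomial `∏_j z_j^{max(-α_j,0)} z̄_j^{max(α_j,0)}` associated with `α ∈ ℤⁿ`. -/
noncomputable def alphaMonomial (n : ℕ) (α : Fin n → ℤ) :
    MvPolynomial (Fin n ⊕ Fin n) ℂ :=
  ∏ j : Fin n, X (Sum.inl j) ^ (max (-α j) 0).toNat * X (Sum.inr j) ^ (max (α j) 0).toNat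

/-- The linear map `Q ↦ Q(|z₁|²,…,|zₙ|²) · ∏_j z_{σ(j)}^{|α_j|}`. -/
noncomputable def alphaMap (n : ℕ) (α : Fin n → ℤ) :
    MvPolynomial (Fin n) ℂ →ₗ[ℂ] MvPolynomial (Fin n ⊕ Fin n) ℂ :=
  (LinearMap.mulRight ℂ (alphaMonomial n α)) ∘ₗ
    (aeval (fun j : Fin n => X (Sum.inl j) * X (Sum.inr j))).toLinearMap

/-!
Write `w_j = z_j z̄_j = |z_j|²`. On a product `Q(w) · ∏_j z_{σ(j)}^{|α_j|}` the Laplacian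
`∑_j ∂_{z_j} ∂_{z̄_j}` acts through `Q` alone: it becomes the operator
`L Q = ∑_j (w_j ∂_j² + (|α_j| + 1) ∂_j) Q` on polynomials in `w`, checked monomial by monomial using
that each `j` contributes only `z_j` or only `z̄_j` to the `α`-monomial. Since `Q ↦ Q(w) · z^α` is
injective, the space in question is isomorphic to the kernel of `L` on homogeneous polynomials of
degree `r`. A triangularity argument shows that `L` maps degree `r` onto degree `r - 1`, so the
kernel has dimension `C(n+r-1, r) - C(n+r-2, r-1) = C(n+r-2, r)`.
-/

namespace Submodule

theorem finrank_map_add_finrank_inf_ker {K V W : Type*} [DivisionRing K] [AddCommGroup V]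
    [Module K V] [AddCommGroup W] [Module K W] (f : V →ₗ[K] W) (p : Submodule K V)
    [FiniteDimensional K p] :
    Module.finrank K (p.map f) + Module.finrank K ↥(p ⊓ LinearMap.ker f) = Module.finrank K p := by
  have h := LinearMap.finrank_range_add_finrank_ker (f.domRestrict p)
  rwa [LinearMap.range_domRestrict, LinearMap.ker_domRestrict, ← finrank_map_subtype_eq,
    map_comap_subtype] at h

theorem map_inf_ker_eq_map_inf_ker {R M N : Type*} [Semiring R] [AddCommMonoid M] [Module R M]
    [AddCommMonoid N] [Module R N] {f : M →ₗ[R] N} {g : N →ₗ[R] N} {h : M →ₗ[R] M}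
    (hf : Function.Injective f) (hfg : g ∘ₗ f = f ∘ₗ h) (p : Submodule R M) :
    p.map f ⊓ LinearMap.ker g = (p ⊓ LinearMap.ker h).map f := by
  have hker (x : M) : g (f x) = 0 ↔ h x = 0 := by
    rw [← LinearMap.comp_apply, hfg, LinearMap.comp_apply, map_eq_zero_iff f hf]
  ext y
  constructor
  · rintro ⟨⟨x, hx, rfl⟩, hy⟩
    exact ⟨x, ⟨hx, (hker x).mp hy⟩, rfl⟩
  · rintro ⟨x, ⟨hx, hx'⟩, rfl⟩
    exact ⟨⟨x, hx, rfl⟩, (hker x).mpr hx'⟩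

end Submodule

namespace MvPolynomial

variable {σ R : Type*} [CommSemiring R]

theorem homogeneousSubmodule_eq_span_monomial (r : ℕ) :
    homogeneousSubmodule σ R r =
      Submodule.span R ((fun β => monomial β 1) '' {β : σ →₀ ℕ | β.degree = r}) := by
  rw [homogeneousSubmodule_eq_finsupp_supported, AddMonoidAlgebra.supported_eq_span_single]
  rfl

instance [Finite σ] (r : ℕ) : Module.Finite R (homogeneousSubmodule σ R r) :=
  Module.Finite.iff_fg.mpr (homogeneousSubmodule_fg σ R r)

theorem finrank_homogeneousSubmodule [Fintype σ] {K : Type*} [Field K] (r : ℕ) :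
    Module.finrank K (homogeneousSubmodule σ K r) = (Fintype.card σ + r - 1).choose r := by
  classical
  have hdeg : {β : σ →₀ ℕ | β.degree = r} = ↑((Finset.univ : Finset σ).finsuppAntidiag r) := by
    ext β
    simp [Finset.mem_finsuppAntidiag, Finsupp.degree_eq_sum]
  rw [homogeneousSubmodule_eq_finsupp_supported, hdeg,
    (AddMonoidAlgebra.supportedEquivFinsupp _).finrank_eq, Module.finrank_finsupp_self]
  simpa using Finset.card_finsuppAntidiag_nat_eq_choose (s := (Finset.univ : Finset σ)) r

theorem _root_.Finsupp.degree_sub_single_one_add_one {β : σ →₀ ℕ} {i : σ} (h : β i ≠ 0) :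
    (β - Finsupp.single i 1).degree + 1 = β.degree := by
  conv_rhs => rw [← Finsupp.sub_add_single_one_cancel h]
  rw [map_add, Finsupp.degree_single]

section RadialLaplacian

variable [Fintype σ]

/-- `∑ⱼ wⱼ ∂ⱼ² + (cⱼ + 1) ∂ⱼ`; for `cⱼ = |αⱼ|` it is `cxLaplacian` seen through `alphaMap`. -/
noncomputable def radialLaplacian (c : σ → ℕ) : MvPolynomial σ R →ₗ[R] MvPolynomial σ R :=
  ∑ j, (pderiv j).toLinearMap ∘ₗ
    (LinearMap.mulLeft R (X j) ∘ₗ (pderiv j).toLinearMap + (c j : R) • LinearMap.id)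

variable (c : σ → ℕ)

theorem radialLaplacian_monomial (β : σ →₀ ℕ) (a : R) :
    radialLaplacian c (monomial β a) =
      ∑ j, monomial (β - Finsupp.single j 1) (a * (β j * (β j + c j) : ℕ)) := by
  rw [radialLaplacian, LinearMap.sum_apply]
  refine Finset.sum_congr rfl fun j _ => ?_
  simp only [LinearMap.comp_apply, LinearMap.add_apply, LinearMap.mulLeft_apply,
    Derivation.coeFn_coe, LinearMap.smul_apply, LinearMap.id_apply]
  rw [X_mul_pderiv_monomial, ← Nat.cast_smul_eq_nsmul R, ← add_smul, Derivation.map_smul,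
    pderiv_monomial, smul_monomial, smul_eq_mul]
  congr 1
  push_cast
  ring

theorem map_radialLaplacian_homogeneousSubmodule_le (r : ℕ) :
    (homogeneousSubmodule σ R (r + 1)).map (radialLaplacian c) ≤ homogeneousSubmodule σ R r := by
  rw [homogeneousSubmodule_eq_span_monomial (r := r + 1), Submodule.map_span_le]
  rintro _ ⟨β, hβ, rfl⟩
  rw [radialLaplacian_monomial]
  refine Submodule.sum_mem _ fun j _ => ?_
  by_cases hj : β j = 0
  · simp [hj]
  · have := Finsupp.degree_sub_single_one_add_one hj
    exact isHomogeneous_monomial _ (by rw [Set.mem_ofPred_eq] at hβ; omega)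

theorem homogeneousSubmodule_zero_le_ker_radialLaplacian :
    homogeneousSubmodule σ R 0 ≤ LinearMap.ker (radialLaplacian c) := by
  rw [homogeneousSubmodule_eq_span_monomial, Submodule.span_le]
  rintro _ ⟨β, hβ, rfl⟩
  obtain rfl : β = 0 := (Finsupp.degree_eq_zero_iff β).mp hβ
  change radialLaplacian c (monomial 0 1) = 0
  rw [radialLaplacian_monomial]
  simp

end RadialLaplacian

section Surjectivity

variable [Fintype σ] {K : Type*} [Field K] [CharZero K] (c : σ → ℕ)

/-- Descending induction on the exponent of `i₀`: `radialLaplacian c (monomial (β + single i₀ 1))`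
is a nonzero multiple of `monomial β` plus monomials with a larger exponent of `i₀`. -/
theorem monomial_mem_map_radialLaplacian (i₀ : σ) {r : ℕ} {β : σ →₀ ℕ} (hβ : β.degree = r)
    (a : K) : monomial β a ∈ (homogeneousSubmodule σ K (r + 1)).map (radialLaplacian c) := by
  classical
  set S := (homogeneousSubmodule σ K (r + 1)).map (radialLaplacian c)
  induction hN : r - β i₀ using Nat.strong_induction_on generalizing β a with
  | _ N ih =>
  have hlift : radialLaplacian c (monomial (β + Finsupp.single i₀ 1) (1 : K)) ∈ S :=
    Submodule.mem_map_of_mem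
      (isHomogeneous_monomial _ (by rw [map_add, Finsupp.degree_single, hβ]))
  rw [radialLaplacian_monomial, ← Finset.add_sum_erase _ _ (Finset.mem_univ i₀),
    add_tsub_cancel_right, Submodule.add_mem_iff_left S (Submodule.sum_mem _ fun j hj => ?_)]
    at hlift
  · simp only [Finsupp.add_apply, Finsupp.single_eq_same, one_mul] at hlift
    set k : K := (((β i₀ + 1) * (β i₀ + 1 + c i₀) : ℕ) : K)
    have hk : k ≠ 0 := Nat.cast_ne_zero.mpr (by positivity)
    have := S.smul_mem (a / k) hlift
    rwa [smul_monomial, smul_eq_mul, div_mul_cancel₀ _ hk] at this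
  · have hji₀ : j ≠ i₀ := Finset.ne_of_mem_erase hj
    by_cases hβj : β j = 0
    · simp [hβj, hji₀]
    have hdeg := Finsupp.degree_sub_single_one_add_one (β := β + Finsupp.single i₀ 1) (i := j)
      (by simp [hji₀, hβj])
    rw [map_add, Finsupp.degree_single, hβ] at hdeg
    set γ := β + Finsupp.single i₀ 1 - Finsupp.single j 1
    have hγi₀ : γ i₀ = β i₀ + 1 := by simp [γ, hji₀.symm]
    have hγ : γ.degree = r := by omega
    have hγr : γ i₀ ≤ r := hγ ▸ Finsupp.le_degree i₀ γ
    exact ih _ (by omega) hγ _ rfl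

theorem map_radialLaplacian_homogeneousSubmodule [Nonempty σ] (r : ℕ) :
    (homogeneousSubmodule σ K (r + 1)).map (radialLaplacian c) = homogeneousSubmodule σ K r := by
  refine le_antisymm (map_radialLaplacian_homogeneousSubmodule_le c r) ?_
  rw [homogeneousSubmodule_eq_span_monomial (r := r), Submodule.span_le]
  rintro _ ⟨β, hβ, rfl⟩
  exact monomial_mem_map_radialLaplacian c (Classical.arbitrary σ) hβ 1

theorem finrank_homogeneousSubmodule_inf_ker_radialLaplacian [Nonempty σ] (r : ℕ) :
    Module.finrank K ↥(homogeneousSubmodule σ K r ⊓ LinearMap.ker (radialLaplacian c)) =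
      (Fintype.card σ + r - 2).choose r := by
  obtain ⟨k, hk⟩ : ∃ k, Fintype.card σ = k + 1 :=
    Nat.exists_eq_succ_of_ne_zero Fintype.card_ne_zero
  cases r with
  | zero =>
    rw [inf_eq_left.mpr (homogeneousSubmodule_zero_le_ker_radialLaplacian c),
      finrank_homogeneousSubmodule, Nat.choose_zero_right, Nat.choose_zero_right]
  | succ r =>
    have h := Submodule.finrank_map_add_finrank_inf_ker (radialLaplacian c)
      (homogeneousSubmodule σ K (r + 1))
    rw [map_radialLaplacian_homogeneousSubmodule, finrank_homogeneousSubmodule,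
      finrank_homogeneousSubmodule, hk, show k + 1 + (r + 1) - 1 = (k + r) + 1 by omega,
      Nat.choose_succ_succ', show k + 1 + r - 1 = k + r by omega] at h
    rw [hk, show k + 1 + (r + 1) - 2 = k + r by omega]
    omega

end Surjectivity

end MvPolynomial

section AlphaMap

variable {n : ℕ}

theorem alphaMap_injective (α : Fin n → ℤ) : Function.Injective (alphaMap n α) := by
  have hM : alphaMonomial n α ≠ 0 := Finset.prod_ne_zero_iff.mpr fun j _ =>
    mul_ne_zero (pow_ne_zero _ (X_ne_zero _)) (pow_ne_zero _ (X_ne_zero _))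
  have hinv : (aeval (Sum.elim X 1)).comp (aeval fun j : Fin n => X (Sum.inl j) * X (Sum.inr j))
      = AlgHom.id ℂ (MvPolynomial (Fin n) ℂ) :=
    algHom_ext fun j => by simp
  exact (mul_left_injective₀ hM).comp
    (Function.LeftInverse.injective (g := aeval (Sum.elim X 1)) (AlgHom.congr_fun hinv))

noncomputable def alphaMapExponent (α : Fin n → ℤ) (β : Fin n →₀ ℕ) : Fin n ⊕ Fin n →₀ ℕ :=
  Finsupp.equivFunOnFinite.symm
    (Sum.elim (fun j => β j + (max (-α j) 0).toNat) (fun j => β j + (max (α j) 0).toNat))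

theorem alphaMap_monomial (α : Fin n → ℤ) (β : Fin n →₀ ℕ) (a : ℂ) :
    alphaMap n α (monomial β a) = monomial (alphaMapExponent α β) a := by
  change aeval _ (monomial β a) * alphaMonomial n α = _
  rw [aeval_monomial, monomial_eq, Finsupp.prod_fintype _ _ (by simp),
    Finsupp.prod_fintype _ _ (by simp), Fintype.prod_sum_type, alphaMonomial]
  simp only [algebraMap_eq, alphaMapExponent, Finsupp.equivFunOnFinite_symm_apply_apply,
    Sum.elim_inl, Sum.elim_inr, pow_add, mul_pow, Finset.prod_mul_distrib]
  ring

theorem cxLaplacian_monomial (D : Fin n ⊕ Fin n →₀ ℕ) (a : ℂ) :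
    cxLaplacian n (monomial D a) =
      ∑ j, monomial (D - Finsupp.single (Sum.inr j) 1 - Finsupp.single (Sum.inl j) 1)
        (a * (D (Sum.inr j) * D (Sum.inl j) : ℕ)) := by
  rw [cxLaplacian, LinearMap.sum_apply]
  refine Finset.sum_congr rfl fun j _ => ?_
  simp [Finsupp.tsub_apply, mul_assoc]

theorem cxLaplacian_comp_alphaMap (α : Fin n → ℤ) :
    cxLaplacian n ∘ₗ alphaMap n α = alphaMap n α ∘ₗ radialLaplacian fun j => (α j).natAbs := by
  refine linearMap_ext fun β => LinearMap.ext fun a => ?_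
  simp only [LinearMap.comp_apply]
  rw [alphaMap_monomial, cxLaplacian_monomial, radialLaplacian_monomial, map_sum]
  refine Finset.sum_congr rfl fun j _ => ?_
  rw [alphaMap_monomial]
  have hcoef : (β j + (max (α j) 0).toNat) * (β j + (max (-α j) 0).toNat) =
      β j * (β j + (α j).natAbs) := by
    rcases le_total 0 (α j) with h | h
    · rw [show (max (-α j) 0).toNat = 0 by omega,
        show (max (α j) 0).toNat = (α j).natAbs by omega]
      ring
    · rw [show (max (α j) 0).toNat = 0 by omega,
        show (max (-α j) 0).toNat = (α j).natAbs by omega]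
      ring
  simp only [alphaMapExponent, Finsupp.coe_equivFunOnFinite_symm, Sum.elim_inl, Sum.elim_inr,
    hcoef]
  by_cases hβj : β j = 0
  · simp [hβj]
  congr 2
  ext (k | k) <;> by_cases hk : k = j <;> simp [hk, Finsupp.tsub_apply] <;> omega

end AlphaMap

theorem dim_harmonics_associated_to_alpha_general (n r : ℕ) (hn : 2 ≤ n) (α : Fin n → ℤ) :
    Module.finrank ℂ
        ↥(Submodule.map (alphaMap n α) (homogeneousSubmodule (Fin n) ℂ r)
            ⊓ LinearMap.ker (cxLaplacian n))
      = (r + n - 2).choose (n - 2) := by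
  have : Nonempty (Fin n) := ⟨⟨0, by omega⟩⟩
  rw [Submodule.map_inf_ker_eq_map_inf_ker (alphaMap_injective α) (cxLaplacian_comp_alphaMap α),
    ← (Submodule.equivMapOfInjective _ (alphaMap_injective α) _).finrank_eq,
    finrank_homogeneousSubmodule_inf_ker_radialLaplacian, Fintype.card_fin]
  obtain ⟨k, rfl⟩ : ∃ k, n = k + 2 := ⟨n - 2, by omega⟩
  rw [show k + 2 + r - 2 = r + k by omega, show r + (k + 2) - 2 = r + k by omega,
    Nat.add_sub_cancel, Nat.choose_symm_add]

/-- fix `α ∈ ℤⁿ` and `m` with `m - ‖α‖₁ = 2r ≥ 0`.  The space of harmonic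
polynomials on `ℝ^{2n}` of the form `Q(|z₁|²,…,|zₙ|²)·∏_j z_{σ(j)}^{|α_j|}` with `Q`
homogeneous of degree `r` has dimension `C(r+n-2, n-2)`. -/
theorem dim_harmonics_associated_to_alpha (n r m : ℕ) (hn : 2 ≤ n) (α : Fin n → ℤ)
    (hm : m = 2 * r + ∑ j : Fin n, (α j).natAbs) :
    Module.finrank ℂ
        ↥(Submodule.map (alphaMap n α) (homogeneousSubmodule (Fin n) ℂ r)
            ⊓ LinearMap.ker (cxLaplacian n))
      = (r + n - 2).choose (n - 2) :=
  dim_harmonics_associated_to_alpha_general n r hn α
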